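/- arXiv:0911.4025 — 5 statements merged into one kernel-verified Lean document; each statement's English description precedes it below -/
import Mathlib

section
/- Let K be a field of characteristic different from 2 and 3. For every (x,y,z,w) ∈ K⁴ with (x,y,z,w) ≠ (0,0,0,0) satisfying x²+y²+z²+w² = 0 and x³+y³+z³+w³ = 0, the 2×4 matrix with rows (2x, 2y, 2z, 2w) and (3x², 3y², 3z², 3w²) has rank 2. In particular, the projective curve C in P³ defined by these two equations is nonsingular over any such field. -/
/-!
If the Jacobian matrix had rank `< 2` at a point `a`, all its `2 × 2` minors
`6 aᵢ aⱼ (aⱼ - aᵢ)` would vanish, so all nonzero coordinates of `a` would share one value `t`.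
Then `∑ aᵢ² = k t²`, where `1 ≤ k ≤ 4` counts the nonzero coordinates, and `k ≠ 0` in `K`
because the characteristic is neither `2` nor `3`; hence `t = 0`, a contradiction.
-/

open Finset

theorem Matrix.rank_eq_two_of_minor_ne_zero {R n : Type*} [CommRing R] [IsDomain R] [Fintype n]
    (A : Matrix (Fin 2) n R) (i j : n) (h : A 0 i * A 1 j - A 0 j * A 1 i ≠ 0) :
    A.rank = 2 := by
  refine le_antisymm (by simpa using A.rank_le_card_height) ?_
  have hdet : (A.submatrix id ![i, j]).det ≠ 0 := by
    simpa [Matrix.det_fin_two] using h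
  calc 2 = (A.submatrix id ![i, j]).rank := by
        rw [Matrix.rank_of_det_ne_zero hdet, Fintype.card_fin]
    _ ≤ A.rank := A.rank_submatrix_le id _

theorem eq_zero_of_sum_pow_eq_zero_of_nonzero_entries_eq {ι K : Type*} [Fintype ι] [Field K]
    (hchar : ∀ k : ℕ, 0 < k → k ≤ Fintype.card ι → (k : K) ≠ 0) {a : ι → K} {m : ℕ}
    (hm : m ≠ 0) (heq : ∀ i j, a i ≠ 0 → a j ≠ 0 → a i = a j) (hsum : ∑ i, a i ^ m = 0) :
    a = 0 := by
  classical
  by_contra ha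
  obtain ⟨i₀, hi₀⟩ := Function.ne_iff.mp ha
  set s := univ.filter fun i => a i ≠ 0
  have hi₀s : i₀ ∈ s := mem_filter.mpr ⟨mem_univ _, hi₀⟩
  have hsum_s : ∑ i, a i ^ m = #s * a i₀ ^ m := calc
    ∑ i, a i ^ m = ∑ i ∈ s, a i ^ m := by
      refine (sum_subset (subset_univ s) fun i _ hi => ?_).symm
      simp_all [s]
    _ = ∑ _i ∈ s, a i₀ ^ m := sum_congr rfl fun i hi => by
      rw [heq i i₀ (mem_filter.mp hi).2 hi₀]
    _ = #s * a i₀ ^ m := by rw [sum_const, nsmul_eq_mul]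
  exact mul_ne_zero (hchar _ (card_pos.mpr ⟨i₀, hi₀s⟩) (card_le_univ s)) (pow_ne_zero m hi₀)
    (hsum_s ▸ hsum)

theorem rank_jacobian_sum_sq_sum_cube {ι K : Type*} [Fintype ι] [Field K]
    (h2 : (2 : K) ≠ 0) (h3 : (3 : K) ≠ 0)
    (hchar : ∀ k : ℕ, 0 < k → k ≤ Fintype.card ι → (k : K) ≠ 0) {a : ι → K} (ha : a ≠ 0)
    (hsum : ∑ i, a i ^ 2 = 0) :
    (Matrix.of ![fun i => 2 * a i, fun i => 3 * a i ^ 2]).rank = 2 := by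
  by_contra hrank
  have hminor : ∀ i j, a i * a j * (a j - a i) = 0 := fun i j => by
    by_contra hne
    refine hrank (Matrix.rank_eq_two_of_minor_ne_zero _ i j ?_)
    have h6 : (6 : K) ≠ 0 := by simpa [show (6 : K) = 2 * 3 by norm_num] using ⟨h2, h3⟩
    show 2 * a i * (3 * a j ^ 2) - 2 * a j * (3 * a i ^ 2) ≠ 0
    rw [show 2 * a i * (3 * a j ^ 2) - 2 * a j * (3 * a i ^ 2) = 6 * (a i * a j * (a j - a i))
      by ring]
    exact mul_ne_zero h6 hne
  refine ha (eq_zero_of_sum_pow_eq_zero_of_nonzero_entries_eq hchar two_ne_zero ?_ hsum)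
  intro i j hi hj
  simpa [hi, hj, sub_eq_zero, eq_comm] using hminor i j

theorem stmt_1_general (K : Type*) [Field K] (h2 : (2 : K) ≠ 0) (h3 : (3 : K) ≠ 0)
    (x y z w : K) (hne : (x, y, z, w) ≠ (0, 0, 0, 0))
    (e1 : x ^ 2 + y ^ 2 + z ^ 2 + w ^ 2 = 0) :
    Matrix.rank !![2 * x, 2 * y, 2 * z, 2 * w;
                   3 * x ^ 2, 3 * y ^ 2, 3 * z ^ 2, 3 * w ^ 2] = 2 := by
  have hchar : ∀ k : ℕ, 0 < k → k ≤ Fintype.card (Fin 4) → (k : K) ≠ 0 := by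
    intro k hk hk4
    rw [Fintype.card_fin] at hk4
    interval_cases k
    · simp
    · exact_mod_cast h2
    · exact_mod_cast h3
    · simpa [show (4 : K) = 2 * 2 by norm_num] using h2
  have ha : ![x, y, z, w] ≠ 0 := fun h =>
    hne (Prod.ext (congrFun h 0) (Prod.ext (congrFun h 1) (Prod.ext (congrFun h 2) (congrFun h 3))))
  have hsum : ∑ i, ![x, y, z, w] i ^ 2 = 0 := by simpa [Fin.sum_univ_four] using e1
  convert rank_jacobian_sum_sq_sum_cube h2 h3 hchar ha hsum using 2
  ext i j
  fin_cases i <;> fin_cases j <;> rfl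

/-- Over a field `K` of characteristic different from `2` and `3`,
at every nonzero solution `(x,y,z,w)` of `x²+y²+z²+w² = 0`, `x³+y³+z³+w³ = 0`, the
Jacobian matrix of the two defining forms has full rank `2`; in particular the
projective curve `C ⊂ ℙ³` defined by these equations is nonsingular. -/
theorem stmt_1 (K : Type*) [Field K] (h2 : (2 : K) ≠ 0) (h3 : (3 : K) ≠ 0)
    (x y z w : K) (hne : (x, y, z, w) ≠ (0, 0, 0, 0))
    (e1 : x ^ 2 + y ^ 2 + z ^ 2 + w ^ 2 = 0)
    (e2 : x ^ 3 + y ^ 3 + z ^ 3 + w ^ 3 = 0) :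
    Matrix.rank !![2 * x, 2 * y, 2 * z, 2 * w;
                   3 * x ^ 2, 3 * y ^ 2, 3 * z ^ 2, 3 * w ^ 2] = 2 :=
  stmt_1_general K h2 h3 x y z w hne e1
end

section
/- Let K be a field of characteristic different from 2 and 3, and let f(x,y) = (x³+y³+1)² + (x²+y²+1)³ ∈ K[x,y]. A point (x,y) ∈ K² satisfies f(x,y) = 0, ∂f/∂x(x,y) = 0 and ∂f/∂y(x,y) = 0 if and only if x³+y³+1 = 0 and x²+y²+1 = 0. -/
/-!
Write `A = x³+y³+1` and `B = x²+y²+1`, so that `f = A² + B³` and `∂f/∂x = 6x(xA + B²)`,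
`∂f/∂y = 6y(yA + B²)`. At a singular point with `B ≠ 0`, `(A, B)` lies on the cusp
`A² + B³ = 0` away from its vertex, so `A = -s³`, `B = -s²` for `s = -B²/A`, and the
derivative equations force each of `x, y` to be `0` or `s`. Comparing `A = -s³` with
`B = -s²` then gives `s = 1` and `x + y = -2` with `x, y ∈ {0, 1}`, which is impossible unless
`2 = 0` or `3 = 0`. Hence `B = 0`, and then `A² = 0`.
-/

open MvPolynomial

/-- The polynomial `f(x,y) = (x³+y³+1)² + (x²+y²+1)³`, the affine plane model of the
curve `C : x²+y²+z²+w² = 0, x³+y³+z³+w³ = 0` in `ℙ³`. -/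
noncomputable def fModel (K : Type*) [CommRing K] : MvPolynomial (Fin 2) K :=
  ((X 0) ^ 3 + (X 1) ^ 3 + 1) ^ 2 + ((X 0) ^ 2 + (X 1) ^ 2 + 1) ^ 3

section Evaluation

variable {K : Type*} [CommRing K] (x y : K)

lemma eval_fModel :
    eval ![x, y] (fModel K) = (x ^ 3 + y ^ 3 + 1) ^ 2 + (x ^ 2 + y ^ 2 + 1) ^ 3 := by
  simp [fModel]

lemma eval_pderiv_zero_fModel :
    eval ![x, y] (pderiv 0 (fModel K)) =
      6 * (x * (x * (x ^ 3 + y ^ 3 + 1) + (x ^ 2 + y ^ 2 + 1) ^ 2)) := by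
  simp [fModel]
  ring

lemma eval_pderiv_one_fModel :
    eval ![x, y] (pderiv 1 (fModel K)) =
      6 * (y * (y * (x ^ 3 + y ^ 3 + 1) + (x ^ 2 + y ^ 2 + 1) ^ 2)) := by
  simp [fModel]
  ring

end Evaluation

section Field

variable {K : Type*} [Field K]

lemma eq_neg_pow_of_sq_add_cube_eq_zero {A B t : K} (hcusp : A ^ 2 + B ^ 3 = 0)
    (ht : t * A + B ^ 2 = 0) (hB : B ≠ 0) : A = -t ^ 3 ∧ B = -t ^ 2 := by
  have hB' : B ^ 3 * (B + t ^ 2) = 0 := by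
    linear_combination (B ^ 2 - t * A) * ht + t ^ 2 * hcusp
  have hBt : B = -t ^ 2 := by
    linear_combination (mul_eq_zero.mp hB').resolve_left (pow_ne_zero 3 hB)
  have htA : t * (A + t ^ 3) = 0 := by linear_combination ht + (t ^ 2 - B) * hBt
  have ht0 : t ≠ 0 := by rintro rfl; simp_all
  exact ⟨by linear_combination (mul_eq_zero.mp htA).resolve_left ht0, hBt⟩

lemma mul_sub_eq_zero_of_mul_add_sq_eq_zero {A B s t : K} (hA : A ≠ 0)
    (hs : s * A + B ^ 2 = 0) (ht : t * (t * A + B ^ 2) = 0) : t * (t - s) = 0 := by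
  have h : t * (t - s) * A = 0 := by linear_combination ht - t * hs
  exact (mul_eq_zero.mp h).resolve_right hA

lemma two_eq_zero_or_three_eq_zero {x y s : K} (hx : x * (x - s) = 0) (hy : y * (y - s) = 0)
    (hA : x ^ 3 + y ^ 3 + 1 = -s ^ 3) (hB : x ^ 2 + y ^ 2 + 1 = -s ^ 2) :
    (2 : K) = 0 ∨ (3 : K) = 0 := by
  obtain rfl : s = 1 := by linear_combination s * hB - hA + x * hx + y * hy
  rcases mul_eq_zero.mp hx with rfl | hx <;> rcases mul_eq_zero.mp hy with rfl | hy
  · exact Or.inl (by linear_combination hB)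
  · exact Or.inr (by linear_combination hB - (y + 1) * hy)
  · exact Or.inr (by linear_combination hB - (x + 1) * hx)
  · exact Or.inl (mul_self_eq_zero.mp (by linear_combination hB - (x + 1) * hx - (y + 1) * hy))

lemma sq_add_sq_add_one_eq_zero_of_singular (h2 : (2 : K) ≠ 0) (h3 : (3 : K) ≠ 0) {x y : K}
    (hf : (x ^ 3 + y ^ 3 + 1) ^ 2 + (x ^ 2 + y ^ 2 + 1) ^ 3 = 0)
    (hx : x * (x * (x ^ 3 + y ^ 3 + 1) + (x ^ 2 + y ^ 2 + 1) ^ 2) = 0)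
    (hy : y * (y * (x ^ 3 + y ^ 3 + 1) + (x ^ 2 + y ^ 2 + 1) ^ 2) = 0) :
    x ^ 2 + y ^ 2 + 1 = 0 := by
  by_contra hB
  have hA : x ^ 3 + y ^ 3 + 1 ≠ 0 := fun hA =>
    hB (pow_eq_zero_iff three_ne_zero |>.mp (by linear_combination hf - (x ^ 3 + y ^ 3 + 1) * hA))
  obtain ⟨s, hs⟩ : ∃ s, s * (x ^ 3 + y ^ 3 + 1) + (x ^ 2 + y ^ 2 + 1) ^ 2 = 0 :=
    ⟨-(x ^ 2 + y ^ 2 + 1) ^ 2 / (x ^ 3 + y ^ 3 + 1), by field_simp; ring⟩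
  obtain ⟨hAs, hBs⟩ := eq_neg_pow_of_sq_add_cube_eq_zero hf hs hB
  rcases two_eq_zero_or_three_eq_zero (mul_sub_eq_zero_of_mul_add_sq_eq_zero hA hs hx)
    (mul_sub_eq_zero_of_mul_add_sq_eq_zero hA hs hy) hAs hBs with h | h
  exacts [h2 h, h3 h]

end Field

/-- Over a field of characteristic different from `2` and `3`, a point
`(x,y)` satisfies `f = ∂f/∂x = ∂f/∂y = 0` if and only if `x³+y³+1 = 0` and
`x²+y²+1 = 0`. -/
theorem stmt_2 (K : Type*) [Field K] (h2 : (2 : K) ≠ 0) (h3 : (3 : K) ≠ 0)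
    (x y : K) :
    (eval ![x, y] (fModel K) = 0 ∧
     eval ![x, y] (pderiv (0 : Fin 2) (fModel K)) = 0 ∧
     eval ![x, y] (pderiv (1 : Fin 2) (fModel K)) = 0)
    ↔ (x ^ 3 + y ^ 3 + 1 = 0 ∧ x ^ 2 + y ^ 2 + 1 = 0) := by
  have h6 : (6 : K) ≠ 0 := by
    simpa [show (6 : K) = 2 * 3 by norm_num] using mul_ne_zero h2 h3
  rw [eval_fModel, eval_pderiv_zero_fModel, eval_pderiv_one_fModel,
    mul_eq_zero_iff_left h6, mul_eq_zero_iff_left h6]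
  constructor
  · rintro ⟨hf, hx, hy⟩
    have hB := sq_add_sq_add_one_eq_zero_of_singular h2 h3 hf hx hy
    have hA : (x ^ 3 + y ^ 3 + 1) ^ 2 = 0 := by
      linear_combination hf - (x ^ 2 + y ^ 2 + 1) ^ 2 * hB
    exact ⟨pow_eq_zero_iff two_ne_zero |>.mp hA, hB⟩
  · rintro ⟨hA, hB⟩
    simp [hA, hB]
end

section
/- Let K be a field of characteristic 0 and let (a,b) ∈ K² satisfy a³+b³+1 = 0 and a²+b²+1 = 0 (so (a,b) is a singular point of f, and a ≠ 0 and b ≠ 0). Write the translated polynomial f(x+a, y+b) ∈ K[x,y] as a sum of homogeneous components F₀ + F₁ + ⋯ + F₆, where F_i is homogeneous of degree i. Then F₀ = 0, F₁ = 0, and F₂ = (3a²x + 3b²y)², which is a nonzero polynomial. In particular each singular point of f has multiplicity exactly 2. -/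
/-!
Around `(a, b)`, `f(x+a, y+b) = (ℓ + P + (a³+b³+1))² + (Q + (a²+b²+1))³` with
`ℓ = 3a²x + 3b²y` linear, `P` of order `≥ 2` and `Q` of order `≥ 1`. At a singular point both
constants vanish, so `f(x+a, y+b) ≡ ℓ²` modulo the cube of the ideal of the origin, and `ℓ ≠ 0`
because `3a² ≠ 0`.
-/

open MvPolynomial

/-- The translate `f(x+a, y+b)` of `fModel` by a point `(a,b)`. -/
noncomputable def fTranslate (K : Type*) [CommRing K] (a b : K) : MvPolynomial (Fin 2) K :=
  aeval ![X 0 + C a, X 1 + C b] (fModel K)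

namespace MvPolynomial

variable {σ R : Type*} [CommSemiring R]

/-- The `k`-th power of the ideal of the origin: no monomial of total degree `< k`. -/
def degreeGE (k : ℕ) : Ideal (MvPolynomial σ R) where
  carrier := {p | ∀ d ∈ p.support, k ≤ d.degree}
  zero_mem' := by simp
  add_mem' := by
    classical
    intro p q hp hq d hd
    rcases Finset.mem_union.mp (support_add hd) with hd | hd
    exacts [hp d hd, hq d hd]
  smul_mem' := by
    classical
    intro c p hp d hd
    obtain ⟨e, -, f, hf, rfl⟩ := Finset.mem_add.mp (support_mul c p hd)
    rw [map_add]
    exact (hp f hf).trans (Nat.le_add_left _ _)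

theorem degreeGE_anti {i j : ℕ} (h : i ≤ j) : degreeGE (σ := σ) (R := R) j ≤ degreeGE i :=
  fun _ hp d hd => h.trans (hp d hd)

theorem mul_mem_degreeGE {i j : ℕ} {p q : MvPolynomial σ R} (hp : p ∈ degreeGE i)
    (hq : q ∈ degreeGE j) : p * q ∈ degreeGE (i + j) := by
  classical
  intro d hd
  obtain ⟨e, he, f, hf, rfl⟩ := Finset.mem_add.mp (support_mul p q hd)
  rw [map_add]
  exact add_le_add (hp e he) (hq f hf)

theorem IsHomogeneous.mem_degreeGE {k : ℕ} {p : MvPolynomial σ R} (hp : p.IsHomogeneous k) :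
    p ∈ degreeGE k := fun _ hd =>
  (hp.degree_eq_sum_deg_support hd).le

theorem homogeneousComponent_eq_zero_of_mem_degreeGE {k n : ℕ} {p : MvPolynomial σ R}
    (hp : p ∈ degreeGE k) (hn : n < k) : homogeneousComponent n p = 0 :=
  homogeneousComponent_eq_zero' n p fun d hd => (hn.trans_le (hp d hd)).ne'

theorem add_mem_degreeGE_of_isHomogeneous {i j : ℕ} {p q : MvPolynomial σ R}
    (hp : p.IsHomogeneous i) (hq : q.IsHomogeneous j) (hij : i ≤ j) : p + q ∈ degreeGE i :=
  add_mem hp.mem_degreeGE (degreeGE_anti hij hq.mem_degreeGE)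

theorem homogeneousComponent_sq_add_cube {L P Q : MvPolynomial σ R} (hL : L.IsHomogeneous 1)
    (hP : P ∈ degreeGE 2) (hQ : Q ∈ degreeGE 1) {n : ℕ} (hn : n < 3) :
    homogeneousComponent n ((L + P) ^ 2 + Q ^ 3) = if n = 2 then L ^ 2 else 0 := by
  have hrest : 2 * (L * P) + P * P + Q * Q * Q ∈ degreeGE 3 := by
    refine add_mem (add_mem ?_ ?_) ?_
    · exact Ideal.mul_mem_left _ _ (mul_mem_degreeGE hL.mem_degreeGE hP)
    · exact degreeGE_anti (by norm_num) (mul_mem_degreeGE hP hP)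
    · exact mul_mem_degreeGE (mul_mem_degreeGE hQ hQ) hQ
  rw [show (L + P) ^ 2 + Q ^ 3 = L ^ 2 + (2 * (L * P) + P * P + Q * Q * Q) by ring, map_add,
    homogeneousComponent_eq_zero_of_mem_degreeGE hrest hn, add_zero,
    homogeneousComponent_of_mem (hL.pow 2)]

theorem C_mul_X_add_C_mul_X_ne_zero [Nontrivial R] {u : R} (hu : u ≠ 0) (v : R) {i j : σ}
    (hij : i ≠ j) : C u * X i + C v * X j ≠ 0 := by
  classical
  intro h
  have := congrArg (coeff (Finsupp.single i 1)) h
  simp [coeff_X, Finsupp.single_eq_single_iff, hij.symm] at this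
  exact hu this

end MvPolynomial

theorem fTranslate_eq_taylor {K : Type*} [CommRing K] (a b : K) : fTranslate K a b =
    (C (3 * a ^ 2) * X 0 + C (3 * b ^ 2) * X 1 +
        (C (3 * a) * X 0 ^ 2 + C (3 * b) * X 1 ^ 2 + (X 0 ^ 3 + X 1 ^ 3)) +
        C (a ^ 3 + b ^ 3 + 1)) ^ 2 +
      (C (2 * a) * X 0 + C (2 * b) * X 1 + (X 0 ^ 2 + X 1 ^ 2) + C (a ^ 2 + b ^ 2 + 1)) ^ 3 := by
  simp only [fTranslate, fModel, map_add, map_mul, map_pow, map_one, map_ofNat, aeval_X,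
    Matrix.cons_val_zero, Matrix.cons_val_one]
  ring

theorem ne_zero_of_power_sums_eq_zero {K : Type*} [CommRing K] [NeZero (2 : K)] {a b : K}
    (h3 : a ^ 3 + b ^ 3 + 1 = 0) (h2 : a ^ 2 + b ^ 2 + 1 = 0) : a ≠ 0 := by
  rintro rfl
  have hb : b = 1 := by linear_combination b * h2 - h3
  subst hb
  have h20 : (2 : K) = 0 := by linear_combination h2
  exact two_ne_zero h20

/-- Let `K` have characteristic `0` and `(a,b)` satisfy `a³+b³+1 = 0`,
`a²+b²+1 = 0` (so `(a,b)` is a singular point of `f`, and `a ≠ 0`, `b ≠ 0`).  Writing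
`f(x+a,y+b) = F₀ + F₁ + ⋯ + F₆` with `F_i` homogeneous of degree `i`, we have `F₀ = 0`,
`F₁ = 0`, and `F₂ = (3a²x + 3b²y)² ≠ 0`; in particular each singular point of `f` has
multiplicity exactly `2`. -/
theorem stmt_4 (K : Type*) [Field K] [CharZero K] (a b : K)
    (h1 : a ^ 3 + b ^ 3 + 1 = 0) (h2 : a ^ 2 + b ^ 2 + 1 = 0) :
    a ≠ 0 ∧ b ≠ 0 ∧
    homogeneousComponent 0 (fTranslate K a b) = 0 ∧
    homogeneousComponent 1 (fTranslate K a b) = 0 ∧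
    homogeneousComponent 2 (fTranslate K a b)
      = (C (3 * a ^ 2) * X 0 + C (3 * b ^ 2) * X 1) ^ 2 ∧
    (C (3 * a ^ 2) * X 0 + C (3 * b ^ 2) * X 1 : MvPolynomial (Fin 2) K) ^ 2 ≠ 0 := by
  have ha : a ≠ 0 := ne_zero_of_power_sums_eq_zero h1 h2
  have hb : b ≠ 0 :=
    ne_zero_of_power_sums_eq_zero (a := b) (b := a) (by linear_combination h1)
      (by linear_combination h2)
  have hf := fTranslate_eq_taylor a b
  rw [h1, h2, map_zero, add_zero, add_zero] at hf
  have hcomp : ∀ n < 3, homogeneousComponent n (fTranslate K a b) =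
      if n = 2 then (C (3 * a ^ 2) * X 0 + C (3 * b ^ 2) * X 1) ^ 2 else 0 := by
    intro n hn
    rw [hf]
    refine homogeneousComponent_sq_add_cube
      ((isHomogeneous_C_mul_X _ _).add (isHomogeneous_C_mul_X _ _)) ?_ ?_ hn
    · exact add_mem_degreeGE_of_isHomogeneous
        ((isHomogeneous_C_mul_X_pow _ _ 2).add (isHomogeneous_C_mul_X_pow _ _ 2))
        ((isHomogeneous_X_pow _ 3).add (isHomogeneous_X_pow _ 3)) (by norm_num)
    · exact add_mem_degreeGE_of_isHomogeneous
        ((isHomogeneous_C_mul_X _ _).add (isHomogeneous_C_mul_X _ _))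
        ((isHomogeneous_X_pow _ 2).add (isHomogeneous_X_pow _ 2)) (by norm_num)
  refine ⟨ha, hb, hcomp 0 (by norm_num), hcomp 1 (by norm_num), hcomp 2 (by norm_num),
    pow_ne_zero 2 <|
      C_mul_X_add_C_mul_X_ne_zero (mul_ne_zero three_ne_zero (pow_ne_zero 2 ha)) _ (by decide)⟩
end

section
/- Consider the following three Weierstrass curves over ℚ, given by coefficient tuples (a₁, a₂, a₃, a₄, a₆): W₁ = (−3, 0, −9, −27/2, −27), i.e. y² − 3xy − 9y = x³ − (27/2)x − 27; W₂ = (−96, 3456, 110592, 14598144, −5718933504), i.e. y² − 96xy + 110592y = x³ + 3456x² + 14598144x − 5718933504; and W₃ = (0, 0, 0, −27, −378), i.e. y² = x³ − 27x − 378. All three curves have j-invariant equal to −36; in particular W₁ and W₂ have equal j-invariants. -/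
/-!
`W₁` and `W₂` arise from the short form `W₃` by admissible changes of variables
`(X, Y) ↦ (u²X + r, u³Y + u²sX + t)`. Such a change multiplies `c₄` by `u⁻⁴` and `Δ` by `u⁻¹²`,
so `c₄³/Δ` is unchanged and only `W₃` has to be evaluated: `c₄ = 1296`, `Δ = -60466176`.
-/

/-- The Weierstrass curve `y² − 3xy − 9y = x³ − (27/2)x − 27`, a model of the quotient
curve `C/(1,2)`. -/
def W₁ : WeierstrassCurve ℚ := ⟨-3, 0, -9, -27/2, -27⟩

/-- The Weierstrass curve `y² − 96xy + 110592y = x³ + 3456x² + 14598144x − 5718933504`,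
a model of the quotient curve `C/(1,2,3,4)`. -/
def W₂ : WeierstrassCurve ℚ := ⟨-96, 3456, 110592, 14598144, -5718933504⟩

/-- The Weierstrass curve `y² = x³ − 27x − 378`, the common short Weierstrass form. -/
def W₃ : WeierstrassCurve ℚ := ⟨0, 0, 0, -27, -378⟩

namespace WeierstrassCurve

theorem variableChange_c₄_pow_three_div_Δ {K : Type*} [Field K] (W : WeierstrassCurve K)
    (C : VariableChange K) : (C • W).c₄ ^ 3 / (C • W).Δ = W.c₄ ^ 3 / W.Δ := by
  rw [variableChange_c₄, variableChange_Δ, mul_pow, ← pow_mul]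
  exact mul_div_mul_left _ _ (pow_ne_zero _ (Units.ne_zero _))

end WeierstrassCurve

open WeierstrassCurve

theorem W₁_eq_smul_W₃ : W₁ = (⟨Units.mk0 2 two_ne_zero, 3, -3, -36⟩ : VariableChange ℚ) • W₃ := by
  ext <;> simp only [variableChange_def, Units.val_inv_eq_inv_val, Units.val_mk0, W₁, W₃] <;>
    norm_num

theorem W₂_eq_smul_W₃ :
    W₂ = (⟨Units.mk0 16⁻¹ (by norm_num), 15 / 2, -3, 27 / 2⟩ : VariableChange ℚ) • W₃ := by
  ext <;> simp only [variableChange_def, Units.val_inv_eq_inv_val, Units.val_mk0, W₂, W₃] <;>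
    norm_num

theorem W₃_c₄_pow_three_div_Δ : W₃.c₄ ^ 3 / W₃.Δ = -36 := by
  simp only [W₃, c₄, Δ, b₂, b₄, b₆, b₈]
  norm_num

/-- All three Weierstrass curves `W₁`, `W₂`, `W₃` have j-invariant
`c₄³/Δ` equal to `−36`; in particular `W₁` and `W₂` have equal j-invariants. -/
theorem stmt_6 :
    W₁.c₄ ^ 3 / W₁.Δ = -36 ∧
    W₂.c₄ ^ 3 / W₂.Δ = -36 ∧
    W₃.c₄ ^ 3 / W₃.Δ = -36 ∧
    W₁.c₄ ^ 3 / W₁.Δ = W₂.c₄ ^ 3 / W₂.Δ := by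
  have h₁ : W₁.c₄ ^ 3 / W₁.Δ = -36 := by
    rw [W₁_eq_smul_W₃, variableChange_c₄_pow_three_div_Δ, W₃_c₄_pow_three_div_Δ]
  have h₂ : W₂.c₄ ^ 3 / W₂.Δ = -36 := by
    rw [W₂_eq_smul_W₃, variableChange_c₄_pow_three_div_Δ, W₃_c₄_pow_three_div_Δ]
  exact ⟨h₁, h₂, W₃_c₄_pow_three_div_Δ, h₁.trans h₂.symm⟩
end

section
/- In the group algebra ℚ[S₄] of the symmetric group S₄ on 4 letters, define for each subgroup H ≤ S₄ the idempotent ε_H = (1/|H|)·Σ_{h∈H} h. Let σ₁,…,σ₆ be the six subgroups of order 2 generated by the transpositions (1,2), (1,3), (1,4), (2,3), (2,4), (3,4); let τ₁,…,τ₄ be the four subgroups of order 3 generated by (1,2,3), (1,2,4), (1,3,4), (2,3,4); and let F₁, F₂, F₃ be the three cyclic subgroups of order 4 generated by (1,2,3,4), (1,2,4,3), (1,3,2,4). Then 12·ε_{⟨id⟩} + 24·ε_{S₄} = 2(ε_{σ₁} + ⋯ + ε_{σ₆}) + 3(ε_{τ₁} + ⋯ + ε_{τ₄}) + 4(ε_{F₁}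 + ε_{F₂} + ε_{F₃}). -/
/-!
Since `|H| • ε_H = Σ_{h ∈ H} h`, the right-hand side is the sum, over the thirteen cyclic
subgroups listed, of all their elements. Every nontrivial element of `S₄` lies in exactly one
of them (the double transpositions being the squares of the 4-cycles), so this sum counts the
identity thirteen times and every other element once: it equals `12 • 1 + Σ_g g`, which is
`12 ε_⊥ + 24 ε_⊤`.
-/

open Equiv

/-- The idempotent `ε_H = (1/|H|)·Σ_{h∈H} h` in the group algebra `ℚ[S₄]` attached to a
subgroup `H ≤ S₄`. -/
noncomputable def eps (H : Subgroup (Equiv.Perm (Fin 4))) :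
    MonoidAlgebra ℚ (Equiv.Perm (Fin 4)) :=
  (Nat.card H : ℚ)⁻¹ •
    ∑ᶠ h ∈ (H : Set (Equiv.Perm (Fin 4))), MonoidAlgebra.of ℚ (Equiv.Perm (Fin 4)) h

open Subgroup

theorem sum_finsum_mem_add_eq_of_existsUnique_mem {G M ι : Type*} [Group G] [Fintype G]
    [AddCommMonoid M] [Fintype ι] (H : ι → Subgroup G) (hH : ∀ g ≠ 1, ∃! i, g ∈ H i)
    (f : G → M) :
    ∑ i, ∑ᶠ h ∈ (H i : Set G), f h + f 1 = Fintype.card ι • f 1 + ∑ g, f g := by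
  classical
  have hfinsum (i : ι) :
      ∑ᶠ h ∈ (H i : Set G), f h = ∑ g, if g ∈ H i then f g else 0 := by
    rw [finsum_mem_def, finsum_eq_sum_of_fintype]
    simp only [Set.indicator_apply, SetLike.mem_coe]
  have hcount (g : G) :
      ∑ i, (if g ∈ H i then f g else 0) = if g = 1 then Fintype.card ι • f 1 else f g := by
    split_ifs with hg
    · simp [hg]
    · obtain ⟨i, hi, huniq⟩ := hH g hg
      rw [Fintype.sum_eq_single i fun j hj => if_neg fun hj' => hj (huniq j hj'), if_pos hi]
  simp only [hfinsum]
  rw [Finset.sum_comm, Finset.sum_congr rfl fun g _ => hcount g,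
    Fintype.sum_eq_add_sum_compl 1, Fintype.sum_eq_add_sum_compl (1 : G) f, if_pos rfl,
    Finset.sum_congr rfl fun g hg => if_neg (by simpa using hg)]
  abel

theorem finsum_mem_of_eq_card_nsmul_eps (H : Subgroup (Perm (Fin 4))) :
    ∑ᶠ h ∈ (H : Set (Perm (Fin 4))), MonoidAlgebra.of ℚ (Perm (Fin 4)) h =
      Nat.card H • eps H := by
  rw [eps, ← Nat.cast_smul_eq_nsmul ℚ, smul_smul, mul_inv_cancel₀ (mod_cast Nat.card_pos.ne'),
    one_smul]

theorem of_one_eq_eps_bot : MonoidAlgebra.of ℚ (Perm (Fin 4)) 1 = eps ⊥ := by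
  rw [← one_nsmul (eps ⊥), ← card_bot (G := Perm (Fin 4)),
    ← finsum_mem_of_eq_card_nsmul_eps, coe_bot, finsum_mem_singleton]

theorem sum_of_eq_nsmul_eps_top :
    ∑ g, MonoidAlgebra.of ℚ (Perm (Fin 4)) g = 24 • eps ⊤ := by
  have hcard : Nat.card (⊤ : Subgroup (Perm (Fin 4))) = 24 := by
    rw [card_top, Nat.card_perm, Nat.card_fin]; rfl
  rw [← hcard, ← finsum_mem_of_eq_card_nsmul_eps, coe_top, finsum_mem_univ,
    finsum_eq_sum_of_fintype]

def cyclicGenerator : Fin 13 → Perm (Fin 4) :=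
  ![c[0, 1], c[0, 2], c[0, 3], c[1, 2], c[1, 3], c[2, 3],
    c[0, 1, 2], c[0, 1, 3], c[0, 2, 3], c[1, 2, 3],
    c[0, 1, 2, 3], c[0, 1, 3, 2], c[0, 2, 1, 3]]

def cyclicOrder : Fin 13 → ℕ := ![2, 2, 2, 2, 2, 2, 3, 3, 3, 3, 4, 4, 4]

theorem orderOf_cyclicGenerator (i : Fin 13) : orderOf (cyclicGenerator i) = cyclicOrder i := by
  fin_cases i <;> exact (orderOf_eq_iff (by decide)).mpr ⟨by decide, by decide⟩

theorem existsUnique_mem_zpowers_cyclicGenerator (g : Perm (Fin 4)) (hg : g ≠ 1) :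
    ∃! i, g ∈ zpowers (cyclicGenerator i) := by
  simp only [Fintype.existsUnique_iff_card_one, mem_zpowers_iff_mem_range_orderOf,
    orderOf_cyclicGenerator]
  revert g
  decide

/-- In `ℚ[S₄]`, with `σ₁,…,σ₆` the subgroups generated by the six
transpositions, `τ₁,…,τ₄` the four subgroups generated by 3-cycles, and `F₁,F₂,F₃` the
three cyclic subgroups of order 4, one has
`12·ε_{⟨id⟩} + 24·ε_{S₄} = 2(ε_{σ₁}+⋯+ε_{σ₆}) + 3(ε_{τ₁}+⋯+ε_{τ₄}) + 4(ε_{F₁}+ε_{F₂}+ε_{F₃})`. -/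
theorem stmt_13 :
    12 * eps ⊥ + 24 * eps ⊤
      = 2 * (eps (Subgroup.zpowers (c[0, 1] : Equiv.Perm (Fin 4)))
            + eps (Subgroup.zpowers (c[0, 2] : Equiv.Perm (Fin 4)))
            + eps (Subgroup.zpowers (c[0, 3] : Equiv.Perm (Fin 4)))
            + eps (Subgroup.zpowers (c[1, 2] : Equiv.Perm (Fin 4)))
            + eps (Subgroup.zpowers (c[1, 3] : Equiv.Perm (Fin 4)))
            + eps (Subgroup.zpowers (c[2, 3] : Equiv.Perm (Fin 4))))
        + 3 * (eps (Subgroup.zpowers (c[0, 1, 2] : Equiv.Perm (Fin 4)))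
            + eps (Subgroup.zpowers (c[0, 1, 3] : Equiv.Perm (Fin 4)))
            + eps (Subgroup.zpowers (c[0, 2, 3] : Equiv.Perm (Fin 4)))
            + eps (Subgroup.zpowers (c[1, 2, 3] : Equiv.Perm (Fin 4))))
        + 4 * (eps (Subgroup.zpowers (c[0, 1, 2, 3] : Equiv.Perm (Fin 4)))
            + eps (Subgroup.zpowers (c[0, 1, 3, 2] : Equiv.Perm (Fin 4)))
            + eps (Subgroup.zpowers (c[0, 2, 1, 3] : Equiv.Perm (Fin 4)))) := by
  have key := sum_finsum_mem_add_eq_of_existsUnique_mem _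
    existsUnique_mem_zpowers_cyclicGenerator (MonoidAlgebra.of ℚ (Perm (Fin 4)))
  simp only [finsum_mem_of_eq_card_nsmul_eps, Nat.card_zpowers, orderOf_cyclicGenerator,
    of_one_eq_eps_bot, sum_of_eq_nsmul_eps_top, Fin.sum_univ_succ, Fin.sum_univ_zero,
    Fintype.card_fin] at key
  simp only [cyclicGenerator, cyclicOrder, Matrix.cons_val_zero, Matrix.cons_val_succ] at key
  simp only [← Nat.ofNat_nsmul_eq_mul, nsmul_add]
  rw [← add_left_inj (eps ⊥)]
  convert key.symm using 1 <;> abel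
end
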